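/- arXiv:2406.05825 — 3 statements merged into one kernel-verified Lean document; each statement's English description precedes it below -/
import Mathlib

section
/- Let G be a finite connected simple graph on at least 2 vertices, let f be an independent broadcast on G, and let H_1, H_2, …, H_k be pairwise vertex-disjoint isometric subgraphs of G, each containing at least two vertices that are broadcasting under f. Then f(V(G)) ≤ Σ_{i=1}^{k} α_b(H_i) + Σ_{v ∈ V(G) \ (V(H_1)∪…∪V(H_k))} f(v). -/
variable {V : Type*}

/-- The eccentricity of a vertex: the maximum distance to any vertex. -/
noncomputable def ecc (G : SimpleGraph V) [Fintype V] (v : V) : ℕ :=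
  Finset.univ.sup (fun u => G.dist u v)

/-- A broadcast on `G`: a function assigning each vertex a power at most its eccentricity. -/
def IsBroadcast (G : SimpleGraph V) [Fintype V] (f : V → ℕ) : Prop :=
  ∀ v, f v ≤ ecc G v

/-- `u` hears the broadcasting vertex `v`. -/
def Hears (G : SimpleGraph V) (f : V → ℕ) (u v : V) : Prop :=
  0 < f v ∧ G.dist u v ≤ f v

/-- An independent broadcast: no broadcasting vertex hears another vertex. -/
def IsIndepBroadcast (G : SimpleGraph V) [Fintype V] (f : V → ℕ) : Prop :=
  IsBroadcast G f ∧ ∀ v w, 0 < f v → v ≠ w → ¬ Hears G f v w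

/-- The broadcast independence number: the maximum weight of an independent broadcast. -/
noncomputable def alphaB (G : SimpleGraph V) [Fintype V] : ℕ :=
  sSup {w | ∃ f, IsIndepBroadcast G f ∧ w = ∑ v, f v}

lemma dist_le_ecc [Fintype V] (G : SimpleGraph V) (u v : V) : G.dist u v ≤ ecc G v :=
  Finset.le_sup (f := fun u => G.dist u v) (Finset.mem_univ u)

namespace IsIndepBroadcast

variable [Fintype V] {G : SimpleGraph V} {f : V → ℕ}

lemma sum_le_alphaB (hf : IsIndepBroadcast G f) : ∑ v, f v ≤ alphaB G :=
  le_csSup ⟨∑ v, ecc G v, fun _ ⟨_, hg, hw⟩ => hw ▸ Finset.sum_le_sum fun v _ => hg.1 v⟩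
    ⟨f, hf, rfl⟩

lemma lt_dist (hf : IsIndepBroadcast G f) {v w : V} (hv : 0 < f v) (hw : 0 < f w)
    (hvw : v ≠ w) : f w < G.dist v w := by
  by_contra! h
  exact hf.2 v w hv hvw ⟨hw, h⟩

/-- A second broadcasting vertex `z` of `S` does not hear `x`, so `f x < d(z, x) = d_S(z, x)`, which
is at most the eccentricity of `x` in the subgraph. -/
lemma induce (hf : IsIndepBroadcast G f) (S : Set V) [Fintype S]
    (hS : ∀ x y : S, (G.induce S).dist x y = G.dist x y)
    (h2 : ∃ x y : S, x ≠ y ∧ 0 < f x ∧ 0 < f y) :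
    IsIndepBroadcast (G.induce S) (fun x => f x) := by
  refine ⟨fun x => ?_, fun v w hv hvw ⟨hw, hd⟩ => ?_⟩
  · rcases Nat.eq_zero_or_pos (f x) with h0 | hx
    · exact h0.trans_le (Nat.zero_le _)
    obtain ⟨z, hzx, hz⟩ : ∃ z : S, z ≠ x ∧ 0 < f z := by
      obtain ⟨a, b, hab, ha, hb⟩ := h2
      by_cases hax : a = x
      · exact ⟨b, hax ▸ hab.symm, hb⟩
      · exact ⟨a, hax, ha⟩
    calc f x ≤ G.dist z x := (hf.lt_dist hz hx (Subtype.coe_ne_coe.mpr hzx)).le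
      _ = (G.induce S).dist z x := (hS z x).symm
      _ ≤ ecc (G.induce S) x := dist_le_ecc _ _ _
  · exact (hf.lt_dist hv hw (Subtype.coe_ne_coe.mpr hvw)).not_ge (hS v w ▸ hd)

end IsIndepBroadcast

theorem stmt1_general [Fintype V] [DecidableEq V] (G : SimpleGraph V)
    (f : V → ℕ) (hf : IsIndepBroadcast G f)
    (n : ℕ) (s : Fin n → Finset V)
    (hdisj : ∀ i j, i ≠ j → Disjoint (s i) (s j))
    (hiso : ∀ i, ∀ x y : (s i : Set V), (G.induce (s i : Set V)).dist x y = G.dist x y)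
    (h2 : ∀ i, ∃ x y : (s i : Set V), x ≠ y ∧ 0 < f x ∧ 0 < f y) :
    ∑ v, f v ≤ (∑ i, alphaB (G.induce ((s i : Set V)))) +
      ∑ v ∈ Finset.univ \ Finset.univ.biUnion s, f v := by
  have hpd : (↑(Finset.univ : Finset (Fin n)) : Set (Fin n)).PairwiseDisjoint s :=
    fun i _ j _ hij => hdisj i j hij
  calc ∑ v, f v
      = ∑ v ∈ Finset.univ.biUnion s, f v + ∑ v ∈ Finset.univ \ Finset.univ.biUnion s, f v := by
        rw [add_comm, Finset.sum_sdiff (Finset.subset_univ _)]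
    _ = ∑ i, ∑ v ∈ s i, f v + ∑ v ∈ Finset.univ \ Finset.univ.biUnion s, f v := by
        rw [Finset.sum_biUnion hpd]
    _ ≤ _ := by
        gcongr with i
        rw [← Finset.sum_coe_sort]
        exact (hf.induce _ (hiso i) (h2 i)).sum_le_alphaB

/-- if `f` is an independent broadcast on a finite connected graph `G` on at
least two vertices and `H_1, …, H_n` are pairwise vertex-disjoint isometric subgraphs of `G`,
each containing at least two broadcasting vertices, then
`f(V(G)) ≤ Σ_i α_b(H_i) + Σ_{v ∉ ∪ V(H_i)} f(v)`. -/
theorem stmt1 [Fintype V] [DecidableEq V] (G : SimpleGraph V) (hG : G.Connected)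
    (hV : 1 < Fintype.card V) (f : V → ℕ) (hf : IsIndepBroadcast G f)
    (n : ℕ) (s : Fin n → Finset V)
    (hdisj : ∀ i j, i ≠ j → Disjoint (s i) (s j))
    (hiso : ∀ i, ∀ x y : (s i : Set V), (G.induce (s i : Set V)).dist x y = G.dist x y)
    (h2 : ∀ i, ∃ x y : (s i : Set V), x ≠ y ∧ 0 < f x ∧ 0 < f y) :
    ∑ v, f v ≤ (∑ i, alphaB (G.induce ((s i : Set V)))) +
      ∑ v ∈ Finset.univ \ Finset.univ.biUnion s, f v :=
  stmt1_general G f hf n s hdisj hiso h2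
end

section
/- Let T = S(d_1,…,d_k) be a spider, let t be an integer with 1 ≤ t ≤ k − 1, and let f be an independent broadcast on T whose set of broadcasting vertices is exactly {l_t, l_{t+1}, …, l_k}. Then the weight of f satisfies f(V) ≤ (d_t + d_{t+1} − 1) + Σ_{j=t+1}^{k} (d_t + d_j − 1). -/
variable {V : Type*}

/-- Vertices of the spider `S(d 0, …, d (k-1))`: `none` is the branch vertex `u`, and
`some ⟨i, j⟩` is the vertex at distance `j + 1` from `u` on the `i`-th branch. -/
abbrev SpiderVert (k : ℕ) (d : Fin k → ℕ) : Type := Option (Σ i : Fin k, Fin (d i))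

/-- The spider `S(d 0, …, d (k-1))`: the tree obtained from the star `K_{1,k}` with
center `u` by subdividing edges so that the `i`-th leaf is at distance `d i` from `u`. -/
def spider (k : ℕ) (d : Fin k → ℕ) : SimpleGraph (SpiderVert k d) where
  Adj x y :=
    match x, y with
    | none, none => False
    | none, some ⟨_, j⟩ => (j : ℕ) = 0
    | some ⟨_, j⟩, none => (j : ℕ) = 0
    | some ⟨i, j⟩, some ⟨i', j'⟩ =>
        (i : ℕ) = (i' : ℕ) ∧ ((j : ℕ) + 1 = (j' : ℕ) ∨ (j' : ℕ) + 1 = (j : ℕ))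
  symm := ⟨by
    rintro (_ | ⟨i, j⟩) (_ | ⟨i', j'⟩) hxy <;> simp_all <;> omega⟩
  loopless := ⟨by
    rintro (_ | ⟨i, j⟩) hxy <;> simp_all⟩

/-- The `i`-th leaf of the spider, at distance `d i` from the branch vertex. -/
def spiderLeaf (k : ℕ) (d : Fin k → ℕ) (hd : ∀ i, 1 ≤ d i) (i : Fin k) : SpiderVert k d :=
  some ⟨i, ⟨d i - 1, by have := hd i; omega⟩⟩

/-- A leaf of the spider: the end vertex of a branch. -/
def IsSpiderLeaf (k : ℕ) (d : Fin k → ℕ) : SpiderVert k d → Prop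
  | none => False
  | some ⟨i, j⟩ => (j : ℕ) + 1 = d i

/-! Two broadcasting leaves `l_i ≠ l_j` are `d_i + d_j` apart and must not hear each other,
so `f(l_j) ≤ d_i + d_j - 1`. Bound `f(l_t)` using `l_{t+1}` and every other `f(l_j)` using `l_t`. -/

theorem IsIndepBroadcast.lt_dist_s10 {G : SimpleGraph V} [Fintype V] {f : V → ℕ}
    (hf : IsIndepBroadcast G f) {v w : V} (hv : 0 < f v) (hw : 0 < f w) (hvw : v ≠ w) :
    f w < G.dist v w :=
  lt_of_not_ge fun hle => hf.2 v w hv hvw ⟨hw, hle⟩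

namespace spider

variable {k : ℕ} {d : Fin k → ℕ}

def walkFromCenter (i : Fin k) : ∀ (j : ℕ) (h : j < d i),
    (spider k d).Walk none (some ⟨i, ⟨j, h⟩⟩)
  | 0, h => .cons (show (spider k d).Adj none (some ⟨i, ⟨0, h⟩⟩) from rfl) .nil
  | j + 1, h => (walkFromCenter i j (by omega)).concat
      (show (i : ℕ) = (i : ℕ) ∧ _ from ⟨rfl, Or.inl rfl⟩)

theorem length_walkFromCenter (i : Fin k) (j : ℕ) (h : j < d i) :
    (walkFromCenter i j h).length = j + 1 := by
  induction j with
  | zero => rfl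
  | succ j ih => exact (SimpleGraph.Walk.length_concat _ _).trans (congrArg (· + 1) (ih _))

theorem dist_le (i i' : Fin k) (j j' : ℕ) (h : j < d i) (h' : j' < d i') :
    (spider k d).dist (some ⟨i, ⟨j, h⟩⟩) (some ⟨i', ⟨j', h'⟩⟩) ≤ j + j' + 2 := by
  have := SimpleGraph.dist_le ((walkFromCenter i j h).reverse.append (walkFromCenter i' j' h'))
  rw [SimpleGraph.Walk.length_append, SimpleGraph.Walk.length_reverse,
    length_walkFromCenter, length_walkFromCenter] at this
  omega

end spider

section SpiderLeaf

variable {k : ℕ} {d : Fin k → ℕ}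

theorem spiderLeaf_injective (hd : ∀ i, 1 ≤ d i) : Function.Injective (spiderLeaf k d hd) :=
  fun _ _ h => congrArg Sigma.fst (Option.some.inj h)

theorem dist_spiderLeaf_le (hd : ∀ i, 1 ≤ d i) (i j : Fin k) :
    (spider k d).dist (spiderLeaf k d hd i) (spiderLeaf k d hd j) ≤ d i + d j := by
  have := hd i; have := hd j
  exact (spider.dist_le i j (d i - 1) (d j - 1) (by omega) (by omega)).trans (by omega)

theorem IsIndepBroadcast.spiderLeaf_lt (hd : ∀ i, 1 ≤ d i) {f : SpiderVert k d → ℕ}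
    (hf : IsIndepBroadcast (spider k d) f) {i j : Fin k} (hij : i ≠ j)
    (hi : 0 < f (spiderLeaf k d hd i)) (hj : 0 < f (spiderLeaf k d hd j)) :
    f (spiderLeaf k d hd j) < d i + d j :=
  (hf.lt_dist_s10 hi hj ((spiderLeaf_injective hd).ne hij)).trans_le (dist_spiderLeaf_le hd i j)

end SpiderLeaf

theorem stmt10_general (k : ℕ) (d : Fin k → ℕ) (hd : ∀ i, 1 ≤ d i)
    (t : Fin k) (ht : (t : ℕ) + 1 < k)
    (f : SpiderVert k d → ℕ) (hf : IsIndepBroadcast (spider k d) f)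
    (hsupp : ∀ v : SpiderVert k d, 0 < f v ↔ ∃ j : Fin k, t ≤ j ∧ v = spiderLeaf k d hd j) :
    ∑ v, f v ≤ (d t + d ⟨(t : ℕ) + 1, ht⟩ - 1) + ∑ j ∈ Finset.Ioi t, (d t + d j - 1) := by
  classical
  set L := spiderLeaf k d hd
  have hpos (j : Fin k) (hj : t ≤ j) : 0 < f (L j) := (hsupp _).2 ⟨j, hj, rfl⟩
  have hsum : ∑ j ∈ Finset.Ici t, f (L j) = ∑ v, f v :=
    Finset.sum_of_injOn L (spiderLeaf_injective hd).injOn (fun _ _ => Finset.mem_univ _)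
      (fun v _ hv => by
        by_contra h0
        obtain ⟨j, hj, rfl⟩ := (hsupp v).1 (Nat.pos_of_ne_zero h0)
        exact hv ⟨j, Finset.mem_Ici.2 hj, rfl⟩)
      (fun _ _ => rfl)
  have hnext : t ≠ ⟨(t : ℕ) + 1, ht⟩ := Fin.ne_of_val_ne (by simp)
  have hfirst : f (L t) < d ⟨(t : ℕ) + 1, ht⟩ + d t :=
    hf.spiderLeaf_lt hd hnext.symm (hpos _ (Fin.le_def.2 (by simp)))
      (hpos t le_rfl)
  rw [← hsum, ← Finset.Ioi_insert, Finset.sum_insert Finset.notMem_Ioi_self]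
  refine Nat.add_le_add (Nat.le_sub_one_of_lt (by omega)) (Finset.sum_le_sum fun j hj => ?_)
  exact Nat.le_sub_one_of_lt <| hf.spiderLeaf_lt hd
    (Finset.mem_Ioi.1 hj).ne (hpos t le_rfl) (hpos j (Finset.mem_Ioi.1 hj).le)

/-- if `f` is an independent broadcast on a spider whose broadcasting
vertices are exactly the leaves `l_t, …, l_k` (here `t` is a 0-based index with
`t + 1 < k`, corresponding to the 1-based range `1 ≤ t ≤ k - 1`), then
`f(V) ≤ (d_t + d_{t+1} - 1) + Σ_{j > t} (d_t + d_j - 1)`. -/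
theorem stmt10 (k : ℕ) (hk : 3 ≤ k) (d : Fin k → ℕ) (hd : ∀ i, 1 ≤ d i)
    (hmono : Monotone d) (t : Fin k) (ht : (t : ℕ) + 1 < k)
    (f : SpiderVert k d → ℕ) (hf : IsIndepBroadcast (spider k d) f)
    (hsupp : ∀ v : SpiderVert k d, 0 < f v ↔ ∃ j : Fin k, t ≤ j ∧ v = spiderLeaf k d hd j) :
    ∑ v, f v ≤ (d t + d ⟨(t : ℕ) + 1, ht⟩ - 1) + ∑ j ∈ Finset.Ioi t, (d t + d j - 1) :=
  stmt10_general k d hd t ht f hf hsupp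
end

section
/- Let T_h^k be a perfect k-ary tree with k ≥ 3 and height h = 3m + t ≥ 3 with 0 ≤ t ≤ 2. Let S ⊆ V(T_h^k) consist of: (1) all vertices at level h−1; (2) all vertices at levels h−2, h−5, …, 1+t (the levels congruent to h−2 modulo 3 that are at least 1+t); and (3) the root when t = 1, or all k vertices at level 1 when t = 2 (nothing extra when t = 0). Then S is a multicover of T_h^k. -/
variable {V : Type*}

/-- A packing broadcast: every vertex hears at most one broadcasting vertex. -/
def IsPackingBroadcast (G : SimpleGraph V) [Fintype V] (f : V → ℕ) : Prop :=
  IsBroadcast G f ∧ ∀ u : V, {v | Hears G f u v}.Subsingleton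

/-- The broadcast packing number: the maximum weight of a packing broadcast. -/
noncomputable def Pb (G : SimpleGraph V) [Fintype V] : ℕ :=
  sSup {w | ∃ f, IsPackingBroadcast G f ∧ w = ∑ v, f v}

/-- A multicover: a set of vertices such that every ball of radius `r` (with
`1 ≤ r ≤ ecc v`) contains at least `r` of its elements. -/
def IsMulticover (G : SimpleGraph V) [Fintype V] (S : Finset V) : Prop :=
  ∀ v : V, ∀ r : ℕ, 1 ≤ r → r ≤ ecc G v → r ≤ (S.filter (fun u => G.dist u v ≤ r)).card

/-- The multicover number: the minimum cardinality of a multicover. -/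
noncomputable def Mc (G : SimpleGraph V) [Fintype V] : ℕ :=
  sInf {n | ∃ S : Finset V, IsMulticover G S ∧ n = S.card}

/-- Vertices of the perfect `k`-ary tree of height `h`: strings of length at most `h`
over a `k`-letter alphabet. -/
abbrev KVert (k h : ℕ) : Type := {l : List (Fin k) // l.length ≤ h}

noncomputable instance (k h : ℕ) : Fintype (KVert k h) :=
  (List.finite_length_le (Fin k) h).fintype

/-- The perfect `k`-ary tree of height `h`: each string of length less than `h` is
adjacent to its `k` one-letter extensions. -/
def karyTree (k h : ℕ) : SimpleGraph (KVert k h) where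
  Adj x y := (∃ a : Fin k, x.1 = a :: y.1) ∨ (∃ a : Fin k, y.1 = a :: x.1)
  symm := ⟨fun x y hxy => hxy.symm⟩
  loopless := by
    constructor
    rintro x (⟨a, ha⟩ | ⟨a, ha⟩) <;>
    · have := congrArg List.length ha
      rw [List.length_cons] at this
      omega

/-- A leaf of the perfect `k`-ary tree of height `h`: a string of length `h`. -/
def IsKLeaf (k h : ℕ) (v : KVert k h) : Prop := v.1.length = h

/-!
Let `v` have level `ℓ`. The level-`q` descendants of the level-`a` ancestor of `v` are
`k ^ (q - a)` vertices within distance `(q - a) + (ℓ - a)` of `v`, and `k ^ n ≥ 2n + 1`.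
When `ℓ + r ≥ h + 2`, levels `h - 1` and `h - 2`, seen from the highest ancestors that keep
them within reach, already give `r` vertices. Otherwise, as every three consecutive levels
below the leaves meet the set, some level `q` of the set with `ℓ + r - 2 ≤ q ≤ ℓ + r` carries
`k ^ (q - ℓ) ≥ 2r - 3` descendants of `v`, enough for `r ≥ 3`; for `r ≤ 2` the levels next
to `v` suffice, with the siblings of `v` or, at the root, level `2`.
-/

open Finset

lemma one_add_two_mul_le_pow {k : ℕ} (hk : 3 ≤ k) (n : ℕ) : 1 + 2 * n ≤ k ^ n :=
  calc 1 + 2 * n ≤ (1 + 2) ^ n := by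
        simpa [mul_comm] using
          one_add_mul_le_pow_of_sq_nonneg (a := (2 : ℕ)) (by simp) (by simp) (by simp) n
    _ ≤ k ^ n := Nat.pow_le_pow_left hk n

namespace karyTree

variable {k h : ℕ}

lemma exists_walk_of_eq_append :
    ∀ (x : List (Fin k)) (u v : KVert k h), u.1 = x ++ v.1 →
      ∃ p : (karyTree k h).Walk u v, p.length = x.length
  | [], u, v, huv => by
    obtain rfl : u = v := Subtype.ext huv
    exact ⟨.nil, rfl⟩
  | a :: x, u, v, huv => by
    have hw : (x ++ v.1).length ≤ h := by
      have := u.2; rw [huv] at this; simp only [List.cons_append, List.length_cons] at this; omega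
    obtain ⟨p, hp⟩ := exists_walk_of_eq_append x ⟨x ++ v.1, hw⟩ v rfl
    have hadj : (karyTree k h).Adj u ⟨x ++ v.1, hw⟩ := Or.inl ⟨a, huv⟩
    exact ⟨.cons hadj p, by simp [hp]⟩

lemma dist_le_of_eq_append {u v : KVert k h} {x y s : List (Fin k)}
    (hu : u.1 = x ++ s) (hv : v.1 = y ++ s) :
    (karyTree k h).dist u v ≤ x.length + y.length := by
  have hs : s.length ≤ h := by
    have := v.2; rw [hv, List.length_append] at this; omega
  obtain ⟨p, hp⟩ := exists_walk_of_eq_append x u ⟨s, hs⟩ hu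
  obtain ⟨q, hq⟩ := exists_walk_of_eq_append y v ⟨s, hs⟩ hv
  simpa [hp, hq] using SimpleGraph.dist_le (p.append q.reverse)

lemma ecc_le (v : KVert k h) : ecc (karyTree k h) v ≤ h + v.1.length :=
  Finset.sup_le fun u _ => by
    have := dist_le_of_eq_append (u := u) (v := v) (s := []) (List.append_nil _).symm
      (List.append_nil _).symm
    have := u.2
    omega

noncomputable def levelBall (v : KVert k h) (r q : ℕ) : Finset (KVert k h) :=
  {u | u.1.length = q ∧ (karyTree k h).dist u v ≤ r}

/-- The level-`q` descendants of the level-`a` ancestor of `v` (a suffix of `v`) lie in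
`levelBall v r q`. -/
lemma pow_le_card_levelBall (v : KVert k h) {a q r : ℕ} (ha : a ≤ v.1.length) (haq : a ≤ q)
    (hq : q ≤ h) (hr : q + v.1.length ≤ r + 2 * a) :
    k ^ (q - a) ≤ #(levelBall v r q) := by
  set s := v.1.drop (v.1.length - a)
  have hs : s.length = a := by simp [s]; omega
  have hlen (f : Fin (q - a) → Fin k) : (List.ofFn f ++ s).length = q := by simp [hs]; omega
  let desc (f : Fin (q - a) → Fin k) : KVert k h := ⟨List.ofFn f ++ s, (hlen f).trans_le hq⟩
  calc k ^ (q - a) = #(univ : Finset (Fin (q - a) → Fin k)) := by simp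
    _ ≤ #(levelBall v r q) := by
      refine card_le_card_of_injOn desc (fun f _ => ?_) fun f _ g _ hfg => ?_
      · have hd := dist_le_of_eq_append (u := desc f) (v := v) rfl
          (List.take_append_drop (v.1.length - a) v.1).symm
        simp only [levelBall, coe_filter, mem_univ, true_and, Set.mem_ofPred_eq]
        refine ⟨hlen f, hd.trans ?_⟩
        simp only [List.length_ofFn, List.length_take]
        omega
      · exact List.ofFn_injective (List.append_cancel_right (congrArg Subtype.val hfg))

variable {S : Finset (KVert k h)} {v : KVert k h} {r : ℕ}

lemma card_levelBall_le {P : ℕ → Prop} (hS : ∀ u : KVert k h, P u.1.length → u ∈ S) {q : ℕ}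
    (hq : P q) : #(levelBall v r q) ≤ #(S.filter fun u => (karyTree k h).dist u v ≤ r) :=
  card_le_card fun u hu => by
    simp only [levelBall, mem_filter, mem_univ, true_and] at hu ⊢
    exact ⟨hS u (hu.1 ▸ hq), hu.2⟩

lemma card_levelBall_add_card_levelBall_le {P : ℕ → Prop}
    (hS : ∀ u : KVert k h, P u.1.length → u ∈ S) {q q' : ℕ} (hq : P q) (hq' : P q')
    (hne : q ≠ q') :
    #(levelBall v r q) + #(levelBall v r q') ≤
      #(S.filter fun u => (karyTree k h).dist u v ≤ r) := by
  rw [← card_union_of_disjoint]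
  · refine card_le_card fun u hu => ?_
    simp only [levelBall, mem_union, mem_filter, mem_univ, true_and] at hu ⊢
    rcases hu with hu | hu
    exacts [⟨hS u (hu.1 ▸ hq), hu.2⟩, ⟨hS u (hu.1 ▸ hq'), hu.2⟩]
  · refine disjoint_left.2 fun u hu hu' => hne ?_
    simp only [levelBall, mem_filter, mem_univ, true_and] at hu hu'
    rw [← hu.1, hu'.1]

lemma le_card_filter_dist_of_le_add {P : ℕ → Prop}
    (hS : ∀ u : KVert k h, P u.1.length → u ∈ S) (hk : 3 ≤ k) (hh : 2 ≤ h)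
    (htop : P (h - 1)) (hsub : P (h - 2)) (hr : r ≤ h + v.1.length)
    (hdeep : h + 2 ≤ v.1.length + r) :
    r ≤ #(S.filter fun u => (karyTree k h).dist u v ≤ r) := by
  have hℓ : v.1.length ≤ h := v.2
  -- the highest ancestors from which levels `h - 1` and `h - 2` are still within distance `r`
  set a := (v.1.length + h - r) / 2
  set a' := (v.1.length + h - 1 - r) / 2
  have hcard := (add_le_add
    (pow_le_card_levelBall v (q := h - 1) (a := a) (r := r) (by omega) (by omega) (by omega)
      (by omega))
    (pow_le_card_levelBall v (q := h - 2) (a := a') (by omega) (by omega) (by omega)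
      (by omega))).trans (card_levelBall_add_card_levelBall_le hS htop hsub (by omega))
  have := one_add_two_mul_le_pow hk (h - 1 - a)
  have := one_add_two_mul_le_pow hk (h - 2 - a')
  omega

theorem isMulticover_of_levels {P : ℕ → Prop} (hS : ∀ u : KVert k h, P u.1.length → u ∈ S)
    (hk : 3 ≤ k) (hh : 2 ≤ h) (htop : P (h - 1)) (hsub : P (h - 2))
    (hwindow : ∀ p ≤ h - 1, ∃ q, P q ∧ p ≤ q ∧ q ≤ p + 2 ∧ q ≤ h - 1)
    (hbot : P 0 ∨ P 1) (hroot : P 0 → P 2) :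
    IsMulticover (karyTree k h) S := by
  intro v r hr1 hr2
  set ℓ := v.1.length
  have hℓ : ℓ ≤ h := v.2
  have hrℓ : r ≤ h + ℓ := hr2.trans (ecc_le v)
  by_cases hdeep : h + 2 ≤ ℓ + r
  · exact le_card_filter_dist_of_le_add hS hk hh htop hsub hrℓ hdeep
  have count {q a : ℕ} (hq : P q) (ha : a ≤ ℓ) (haq : a ≤ q) (hqh : q ≤ h)
      (hr : q + ℓ ≤ r + 2 * a) (hrq : r ≤ 1 + 2 * (q - a)) :
      r ≤ #(S.filter fun u => (karyTree k h).dist u v ≤ r) :=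
    hrq.trans ((one_add_two_mul_le_pow hk _).trans
      ((pow_le_card_levelBall v ha haq hqh hr).trans (card_levelBall_le hS hq)))
  by_cases hr1 : r = 1
  · by_cases hℓ0 : ℓ = 0
    · rcases hbot with hq | hq
      exacts [count (a := 0) hq ℓ.zero_le le_rfl (by omega) (by omega) (by omega),
        count (a := 0) hq ℓ.zero_le (by omega) (by omega) (by omega) (by omega)]
    · obtain ⟨q, hq, hq1, hq2, hqh⟩ := hwindow (ℓ - 1) (by omega)
      exact count (a := min q ℓ) hq (by omega) (by omega) (by omega) (by omega) (by omega)
  obtain ⟨q, hq, hq1, hq2, hqh⟩ := hwindow (ℓ + r - 2) (by omega)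
  by_cases hqℓ : q = ℓ
  · by_cases hℓ0 : ℓ = 0
    · exact count (a := 0) (hroot (hℓ0 ▸ hqℓ ▸ hq)) ℓ.zero_le (by omega) (by omega) (by omega)
        (by omega)
    · exact count (a := ℓ - 1) hq (by omega) (by omega) (by omega) (by omega) (by omega)
  · exact count (a := ℓ) hq le_rfl (by omega) (by omega) (by omega) (by omega)

end karyTree

def IsCoverLevel (h t q : ℕ) : Prop :=
  q = h - 1 ∨ (q % 3 = (h - 2) % 3 ∧ 1 + t ≤ q ∧ q ≤ h - 2) ∨ (t = 1 ∧ q = 0) ∨ (t = 2 ∧ q = 1)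

section IsCoverLevel

variable {h m t : ℕ}

lemma isCoverLevel_sub_two (hh : 3 ≤ h) (ht : t ≤ 2) (hmt : h = 3 * m + t) :
    IsCoverLevel h t (h - 2) :=
  Or.inr (Or.inl ⟨rfl, by omega, le_rfl⟩)

lemma exists_isCoverLevel_window (ht : t ≤ 2) (hmt : h = 3 * m + t) {p : ℕ} (hp : p ≤ h - 1) :
    ∃ q, IsCoverLevel h t q ∧ p ≤ q ∧ q ≤ p + 2 ∧ q ≤ h - 1 := by
  by_cases hph : p = h - 1
  · exact ⟨h - 1, Or.inl rfl, by omega⟩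
  by_cases hp0 : t = 2 ∧ p = 0
  · exact ⟨1, Or.inr (Or.inr (Or.inr ⟨hp0.1, rfl⟩)), by omega⟩
  -- the level of the window congruent to `h - 2` modulo `3`
  refine ⟨p + (h + 1 - p) % 3, Or.inr (Or.inl ⟨?_, ?_, ?_⟩), ?_⟩ <;> omega

lemma isCoverLevel_zero_or_one (ht : t ≤ 2) (hmt : h = 3 * m + t) :
    IsCoverLevel h t 0 ∨ IsCoverLevel h t 1 := by
  unfold IsCoverLevel
  omega

lemma isCoverLevel_two_of_zero (hh : 3 ≤ h) (hmt : h = 3 * m + t) :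
    IsCoverLevel h t 0 → IsCoverLevel h t 2 := by
  unfold IsCoverLevel
  omega

end IsCoverLevel

/-- for the perfect `k`-ary tree (`k ≥ 3`) of height `h = 3m + t ≥ 3`
(`0 ≤ t ≤ 2`), the set consisting of all vertices at level `h-1`, all vertices at the
levels `h-2, h-5, …, 1+t`, together with the root if `t = 1` and all `k` vertices at
level `1` if `t = 2` (nothing extra when `t = 0`), is a multicover. -/
theorem stmt14 (k h m t : ℕ) (hk : 3 ≤ k) (hh : 3 ≤ h) (ht : t ≤ 2) (hmt : h = 3 * m + t) :
    IsMulticover (karyTree k h)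
      (Finset.univ.filter (fun v : KVert k h =>
        v.1.length = h - 1 ∨
        (v.1.length % 3 = (h - 2) % 3 ∧ 1 + t ≤ v.1.length ∧ v.1.length ≤ h - 2) ∨
        (t = 1 ∧ v.1.length = 0) ∨
        (t = 2 ∧ v.1.length = 1))) :=
  karyTree.isMulticover_of_levels (P := IsCoverLevel h t)
    (fun u hu => mem_filter.2 ⟨mem_univ u, hu⟩) hk (by omega) (Or.inl rfl)
    (isCoverLevel_sub_two hh ht hmt)
    (fun _ => exists_isCoverLevel_window ht hmt) (isCoverLevel_zero_or_one ht hmt)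
    (isCoverLevel_two_of_zero hh hmt)
end
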